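/- arXiv:2206.02012 — 8 statements merged into one kernel-verified Lean document; each statement's English description precedes it below -/
import Mathlib

section
/- For an iid sample (X_1,...,X_m) ~ μ^m and any k ∈ [m], the expected mass of the region covered only by the k-th ball satisfies E[μ(B(X_k,r) \ ∪_{i≠k} B(X_i,r))] ≤ 1/m. -/
open MeasureTheory Metric
open scoped ENNReal

/-! Permuting the sample preserves the product measure and permutes the exclusive regions
`B(X_j, r) \ ⋃_{i ≠ j} B(X_i, r)`, so all `m` of them have the same expected mass. These regions
are pairwise disjoint, so their masses add up to at most `1` for every sample; hence `m` times
the expected mass is at most `1`. -/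

namespace Set

variable {ι α : Type*}

def exclusivePart (A : ι → Set α) (j : ι) : Set α :=
  A j \ ⋃ i ∈ ({j}ᶜ : Set ι), A i

theorem exclusivePart_comp_perm (A : ι → Set α) (σ : Equiv.Perm ι) (j : ι) :
    exclusivePart (A ∘ σ) j = exclusivePart A (σ j) := by
  ext y
  simp only [exclusivePart, Function.comp_apply, mem_sdiff, mem_iUnion, mem_compl_iff,
    mem_singleton_iff, exists_prop, and_congr_right_iff, not_exists, not_and]
  intro _
  exact ⟨fun h i hi => by simpa using h (σ.symm i) (by rintro rfl; simp at hi),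
    fun h i hi => h (σ i) (σ.injective.ne hi)⟩

theorem pairwise_disjoint_exclusivePart (A : ι → Set α) :
    Pairwise (Function.onFun Disjoint (exclusivePart A)) := fun _ _ hij =>
  disjoint_left.2 fun _ hi hj => hj.2 (mem_biUnion hij hi.1)

end Set

namespace MeasureTheory

open Set

variable {ι α : Type*} [MeasurableSpace α]

theorem measurableSet_exclusivePart [Countable ι] {A : ι → Set α}
    (hA : ∀ i, MeasurableSet (A i)) (j : ι) : MeasurableSet (exclusivePart A j) :=
  (hA j).diff (.biUnion (to_countable _) fun i _ => hA i)

theorem sum_measure_exclusivePart_le [Fintype ι] (μ : Measure α) {A : ι → Set α}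
    (hA : ∀ i, MeasurableSet (A i)) : ∑ j, μ (exclusivePart A j) ≤ μ univ :=
  sum_measure_le_measure_univ (fun j _ => (measurableSet_exclusivePart hA j).nullMeasurableSet)
    fun _ _ _ _ hij => (pairwise_disjoint_exclusivePart A hij).aedisjoint

theorem sum_lintegral_le_lintegral_sum {β : Type*} (μ : Measure α) (s : Finset β)
    (f : β → α → ℝ≥0∞) : ∑ i ∈ s, ∫⁻ x, f i x ∂μ ≤ ∫⁻ x, ∑ i ∈ s, f i x ∂μ := by
  induction s using Finset.cons_induction with
  | empty => simp
  | cons i s hi ih =>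
    simp only [Finset.sum_cons]
    exact (add_le_add le_rfl ih).trans (le_lintegral_add _ _)

theorem integral_toReal_le_toReal_lintegral (μ : Measure α) {f : α → ℝ≥0∞}
    (hf : ∀ x, f x ≠ ∞) : ∫ x, (f x).toReal ∂μ ≤ (∫⁻ x, f x ∂μ).toReal := by
  calc ∫ x, (f x).toReal ∂μ ≤ ‖∫ x, (f x).toReal ∂μ‖ := Real.le_norm_self _
    _ ≤ (∫⁻ x, ENNReal.ofReal ‖(f x).toReal‖ ∂μ).toReal := norm_integral_le_lintegral_norm _
    _ = (∫⁻ x, f x ∂μ).toReal := by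
      simp only [Real.norm_of_nonneg ENNReal.toReal_nonneg, ENNReal.ofReal_toReal (hf _)]

theorem lintegral_comp_perm [Fintype ι] (μ : Measure α) [SigmaFinite μ] (σ : Equiv.Perm ι)
    (f : (ι → α) → ℝ≥0∞) :
    ∫⁻ x, f (x ∘ σ) ∂Measure.pi (fun _ => μ) = ∫⁻ x, f x ∂Measure.pi (fun _ => μ) := by
  have hσ : (fun x : ι → α => x ∘ σ) = MeasurableEquiv.piCongrLeft (fun _ => α) σ.symm := by
    ext x i
    simp [MeasurableEquiv.coe_piCongrLeft, Equiv.piCongrLeft_apply_eq_cast]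
  rw [← (measurePreserving_piCongrLeft (fun _ : ι => μ) σ.symm).lintegral_comp_emb
    (MeasurableEquiv.measurableEmbedding _) f, ← hσ]

theorem lintegral_measure_exclusivePart_eq [Fintype ι] (μ : Measure α) [SigmaFinite μ]
    (S : α → Set α) (j k : ι) :
    ∫⁻ x, μ (exclusivePart (fun i => S (x i)) j) ∂Measure.pi (fun _ => μ) =
      ∫⁻ x, μ (exclusivePart (fun i => S (x i)) k) ∂Measure.pi (fun _ => μ) := by
  classical
  rw [← lintegral_comp_perm μ (Equiv.swap j k)]
  congr with x
  exact congrArg μ ((exclusivePart_comp_perm (fun i => S (x i)) _ j).trans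
    (by rw [Equiv.swap_apply_left]))

theorem lintegral_measure_exclusivePart_le [Fintype ι] (μ : Measure α) [IsProbabilityMeasure μ]
    {S : α → Set α} (hS : ∀ c, MeasurableSet (S c)) (k : ι) :
    ∫⁻ x, μ (exclusivePart (fun i => S (x i)) k) ∂Measure.pi (fun _ => μ) ≤
      (Fintype.card ι : ℝ≥0∞)⁻¹ := by
  rw [ENNReal.le_inv_iff_mul_le]
  calc (∫⁻ x, μ (exclusivePart (fun i => S (x i)) k) ∂Measure.pi (fun _ => μ)) * Fintype.card ι
      = ∑ j, ∫⁻ x : ι → α, μ (exclusivePart (fun i => S (x i)) j) ∂Measure.pi (fun _ => μ) := by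
        simp only [lintegral_measure_exclusivePart_eq μ S _ k, Finset.sum_const,
          Finset.card_univ, nsmul_eq_mul, mul_comm]
    _ ≤ ∫⁻ x, ∑ j, μ (exclusivePart (fun i => S (x i)) j) ∂Measure.pi (fun _ => μ) :=
        sum_lintegral_le_lintegral_sum _ _ _
    _ ≤ ∫⁻ _, 1 ∂Measure.pi (fun _ => μ) :=
        lintegral_mono fun x => (sum_measure_exclusivePart_le μ fun i => hS (x i)).trans_eq
          measure_univ
    _ = 1 := by simp

end MeasureTheory

/-- For an iid sample of size `m`, the expected mass of the region covered only by
the `k`-th ball is at most `1/m`. -/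
theorem stmt5 {X : Type*} [MetricSpace X] [MeasurableSpace X] [BorelSpace X]
    (μ : Measure X) [IsProbabilityMeasure μ]
    (m : ℕ) (r : ℝ) (k : Fin m) :
    (∫ x : Fin m → X,
        (μ (closedBall (x k) r \ ⋃ i ∈ ({k}ᶜ : Set (Fin m)), closedBall (x i) r)).toReal
        ∂(Measure.pi fun _ => μ)) ≤ 1 / m := by
  have hm : (m : ℝ≥0∞) ≠ 0 := Nat.cast_ne_zero.2 (Fin.pos k).ne'
  calc ∫ x, (μ (Set.exclusivePart (fun i => closedBall (x i) r) k)).toReal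
        ∂Measure.pi (fun _ => μ)
      ≤ (∫⁻ x, μ (Set.exclusivePart (fun i => closedBall (x i) r) k)
          ∂Measure.pi (fun _ => μ)).toReal :=
        integral_toReal_le_toReal_lintegral _ fun _ => measure_ne_top _ _
    _ ≤ ((m : ℝ≥0∞)⁻¹).toReal := ENNReal.toReal_mono (ENNReal.inv_ne_top.2 hm) <| by
        simpa using lintegral_measure_exclusivePart_le (S := (closedBall · r)) μ
          (fun _ => measurableSet_closedBall) k
    _ = 1 / m := by simp
end

section
/- Let R_1,...,R_n be [0,1]-valued random variables adapted to a filtration F_j, V = (1/n) ∑_j R_j and F = (1/n) ∑_j E[R_j | F_{j−1}]. Then E[exp((n/(4(e−2)))(F − 2V))] ≤ 1. -/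
/-!
With `λ = 1 / (4 (e - 2)) ≤ 1 / 2` and `μ_j = E[R_j | F_{j-1}]`, the integrand is
`exp (λ ∑_{j ≤ n} (μ_j - 2 R_j))`. For `x ∈ [0, 1]` convexity of `exp` and `e^{-2λ} ≤ 1 - λ`
give `e^{-2λx} ≤ 1 - λx`, hence `E[e^{-2λ R_j} | F_{j-1}] ≤ 1 - λ μ_j ≤ e^{-λ μ_j}`. So the
partial products form a supermartingale starting at `1`, and their expectations stay `≤ 1`.
-/

open MeasureTheory Real Finset

lemma exp_neg_two_mul_le_one_sub_mul {l x : ℝ} (hl0 : 0 ≤ l) (hl : l ≤ 1 / 2)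
    (hx0 : 0 ≤ x) (hx1 : x ≤ 1) : exp (-(2 * l * x)) ≤ 1 - l * x := by
  have hconv : exp (x * (-(2 * l)) + (1 - x) * 0) ≤ x * exp (-(2 * l)) + (1 - x) * exp 0 :=
    convexOn_exp.2 (Set.mem_univ _) (Set.mem_univ _) hx0 (by linarith) (by ring)
  have hpos : 0 < 1 + 2 * l := by linarith
  have hend : exp (-(2 * l)) ≤ 1 - l :=
    calc exp (-(2 * l)) ≤ (1 + 2 * l)⁻¹ := by
          rw [exp_neg]
          exact inv_anti₀ hpos (by linarith [add_one_le_exp (2 * l)])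
      _ ≤ 1 - l := by
          rw [inv_le_iff_one_le_mul₀ hpos]
          nlinarith
  calc exp (-(2 * l * x)) = exp (x * (-(2 * l)) + (1 - x) * 0) := by ring_nf
    _ ≤ x * exp (-(2 * l)) + (1 - x) := by simpa using hconv
    _ ≤ 1 - l * x := by nlinarith [mul_le_mul_of_nonneg_left hend hx0]

section ConditionalExpectation

variable {Ω : Type*} {m mΩ : MeasurableSpace Ω} {P : Measure Ω} [IsFiniteMeasure P]
  {Y : Ω → ℝ}

lemma integrable_of_mem_Icc (hY : AEStronglyMeasurable Y P) (hY01 : ∀ ω, Y ω ∈ Set.Icc 0 1) :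
    Integrable Y P :=
  .of_bound hY 1 (.of_forall fun ω => by
    rw [norm_of_nonneg (hY01 ω).1]; exact (hY01 ω).2)

lemma condExp_le_one (hm : m ≤ mΩ) (hY : AEStronglyMeasurable Y P)
    (hY01 : ∀ ω, Y ω ∈ Set.Icc 0 1) : ∀ᵐ ω ∂P, P[Y|m] ω ≤ 1 := by
  have h := condExp_mono (m := m) (integrable_of_mem_Icc hY hY01) (integrable_const (1 : ℝ))
    (.of_forall fun ω => (hY01 ω).2)
  rwa [condExp_const hm] at h

lemma integrable_exp_neg_mul (hY : AEStronglyMeasurable Y P) (hY0 : ∀ ω, 0 ≤ Y ω) {c : ℝ}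
    (hc : 0 ≤ c) : Integrable (fun ω => exp (-(c * Y ω))) P :=
  .of_bound (continuous_exp.comp_aestronglyMeasurable (hY.const_mul c).neg) 1
    (.of_forall fun ω => by
      rw [norm_of_nonneg (exp_pos _).le, exp_le_one_iff, neg_nonpos]
      exact mul_nonneg hc (hY0 ω))

lemma condExp_one_sub_const_mul (hm : m ≤ mΩ) (hY : Integrable Y P) (l : ℝ) :
    P[fun ω => 1 - l * Y ω|m] =ᵐ[P] fun ω => 1 - l * P[Y|m] ω := by
  have hfun : (fun ω => 1 - l * Y ω) = (fun _ => (1 : ℝ)) - l • Y := rfl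
  rw [hfun]
  filter_upwards [condExp_sub (integrable_const (1 : ℝ)) (hY.smul l) m,
    condExp_smul (m := m) (μ := P) l Y] with ω h1 h2
  simp [h1, h2, condExp_const hm]

lemma condExp_exp_neg_two_mul_le (hm : m ≤ mΩ) (hY : AEStronglyMeasurable Y P)
    (hY01 : ∀ ω, Y ω ∈ Set.Icc 0 1) {l : ℝ} (hl0 : 0 ≤ l) (hl : l ≤ 1 / 2) :
    P[fun ω => exp (-(2 * l * Y ω))|m] ≤ᵐ[P] fun ω => exp (-(l * P[Y|m] ω)) := by
  have hYint := integrable_of_mem_Icc hY hY01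
  have hmono := condExp_mono (m := m)
    (integrable_exp_neg_mul hY (fun ω => (hY01 ω).1) (by linarith : 0 ≤ 2 * l))
    ((integrable_const 1).sub (hYint.const_mul l))
    (.of_forall fun ω => exp_neg_two_mul_le_one_sub_mul hl0 hl (hY01 ω).1 (hY01 ω).2)
  filter_upwards [hmono, condExp_one_sub_const_mul hm hYint l] with ω h1 h2
  linarith [h2 ▸ h1, add_one_le_exp (-(l * P[Y|m] ω))]

end ConditionalExpectation

section CompensatedExp

variable {Ω : Type*} {mΩ : MeasurableSpace Ω} {P : Measure Ω} {F : Filtration ℕ mΩ}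
  {R : ℕ → Ω → ℝ} {l : ℝ}

noncomputable def compensatedExp (P : Measure Ω) (F : Filtration ℕ mΩ) (R : ℕ → Ω → ℝ) (l : ℝ)
    (k : ℕ) (ω : Ω) : ℝ :=
  exp (∑ j ∈ Icc 1 k, (l * P[R j|F (j - 1)] ω - 2 * l * R j ω))

lemma compensatedExp_zero : compensatedExp P F R l 0 = 1 := by
  ext ω; simp [compensatedExp]

lemma compensatedExp_succ (k : ℕ) :
    compensatedExp P F R l (k + 1) = (fun ω => exp (l * P[R (k + 1)|F k] ω) *
      compensatedExp P F R l k ω) * fun ω => exp (-(2 * l * R (k + 1) ω)) := by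
  ext ω
  simp only [compensatedExp, Pi.mul_apply, ← exp_add]
  rw [sum_Icc_succ_top (by omega), Nat.add_sub_cancel]
  ring_nf

lemma stronglyAdapted_compensatedExp (hadp : StronglyAdapted F R) :
    StronglyAdapted F (compensatedExp P F R l) := fun k =>
  continuous_exp.comp_stronglyMeasurable <| Finset.stronglyMeasurable_fun_sum _ fun j hj =>
    ((stronglyMeasurable_condExp.mono (F.mono (by grind))).const_mul l).sub
      (((hadp j).mono (F.mono (mem_Icc.mp hj).2)).const_mul (2 * l))

variable [IsFiniteMeasure P]

lemma integrable_compensatedExp (hadp : StronglyAdapted F R)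
    (hbd : ∀ j ω, R j ω ∈ Set.Icc (0 : ℝ) 1) (hl0 : 0 ≤ l) (k : ℕ) :
    Integrable (compensatedExp P F R l k) P := by
  have hterm : ∀ᵐ ω ∂P, ∀ j ∈ Icc 1 k, l * P[R j|F (j - 1)] ω - 2 * l * R j ω ≤ l := by
    rw [Filter.eventually_all_finset]
    intro j _
    filter_upwards [condExp_le_one (F.le (j - 1))
      ((hadp j).mono (F.le j)).aestronglyMeasurable (hbd j)] with ω hω
    nlinarith [(hbd j ω).1, mul_le_mul_of_nonneg_left hω hl0]
  refine .of_bound ((stronglyAdapted_compensatedExp hadp k).mono (F.le k)).aestronglyMeasurable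
    (exp (k * l)) ?_
  filter_upwards [hterm] with ω hω
  rw [compensatedExp, norm_of_nonneg (exp_pos _).le, exp_le_exp]
  simpa using sum_le_sum hω

lemma condExp_compensatedExp_succ_le (hadp : StronglyAdapted F R)
    (hbd : ∀ j ω, R j ω ∈ Set.Icc (0 : ℝ) 1) (hl0 : 0 ≤ l) (hl : l ≤ 1 / 2) (k : ℕ) :
    P[compensatedExp P F R l (k + 1)|F k] ≤ᵐ[P] compensatedExp P F R l k := by
  have hpred : StronglyMeasurable[F k] fun ω =>
      exp (l * P[R (k + 1)|F k] ω) * compensatedExp P F R l k ω :=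
    (continuous_exp.comp_stronglyMeasurable (stronglyMeasurable_condExp.const_mul l)).mul
      (stronglyAdapted_compensatedExp hadp k)
  have hpull := condExp_mul_of_stronglyMeasurable_left hpred
    (compensatedExp_succ k ▸ integrable_compensatedExp hadp hbd hl0 (k + 1))
    (integrable_exp_neg_mul ((hadp (k + 1)).mono (F.le _)).aestronglyMeasurable
      (fun ω => (hbd (k + 1) ω).1) (by linarith : 0 ≤ 2 * l))
  rw [compensatedExp_succ]
  filter_upwards [hpull, condExp_exp_neg_two_mul_le (F.le k)
    ((hadp (k + 1)).mono (F.le _)).aestronglyMeasurable (hbd (k + 1)) hl0 hl] with ω h1 h2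
  rw [h1]
  calc (exp (l * P[R (k + 1)|F k] ω) * compensatedExp P F R l k ω) *
        P[fun ω => exp (-(2 * l * R (k + 1) ω))|F k] ω
      ≤ (exp (l * P[R (k + 1)|F k] ω) * compensatedExp P F R l k ω) *
        exp (-(l * P[R (k + 1)|F k] ω)) :=
        mul_le_mul_of_nonneg_left h2 (by unfold compensatedExp; positivity)
    _ = compensatedExp P F R l k ω := by
        rw [mul_comm (exp _), mul_assoc, ← exp_add, add_neg_cancel, exp_zero, mul_one]

lemma supermartingale_compensatedExp (hadp : StronglyAdapted F R)
    (hbd : ∀ j ω, R j ω ∈ Set.Icc (0 : ℝ) 1) (hl0 : 0 ≤ l) (hl : l ≤ 1 / 2) :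
    Supermartingale (compensatedExp P F R l) F P :=
  supermartingale_nat (stronglyAdapted_compensatedExp hadp)
    (integrable_compensatedExp hadp hbd hl0) (condExp_compensatedExp_succ_le hadp hbd hl0 hl)

lemma integral_compensatedExp_le_one [IsProbabilityMeasure P] (hadp : StronglyAdapted F R)
    (hbd : ∀ j ω, R j ω ∈ Set.Icc (0 : ℝ) 1) (hl0 : 0 ≤ l) (hl : l ≤ 1 / 2) (k : ℕ) :
    ∫ ω, compensatedExp P F R l k ω ∂P ≤ 1 := by
  have h := (supermartingale_compensatedExp (P := P) hadp hbd hl0 hl).setIntegral_le (Nat.zero_le k)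
    MeasurableSet.univ
  simpa [compensatedExp_zero] using h

end CompensatedExp

/-- Martingale lemma: for `[0,1]`-valued adapted variables `R_j`,
with `V = (1/n)∑ R_j` and `F = (1/n)∑ E[R_j | F_{j-1}]`,
`E[exp((n/(4(e-2)))(F - 2V))] ≤ 1`. -/
theorem stmt6 {Ω : Type*} {mΩ : MeasurableSpace Ω} (P : Measure Ω) [IsProbabilityMeasure P]
    (F : Filtration ℕ mΩ) (n : ℕ) (R : ℕ → Ω → ℝ)
    (hadp : StronglyAdapted F R) (hbd : ∀ j ω, R j ω ∈ Set.Icc (0 : ℝ) 1) :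
    (∫ ω, Real.exp (((n : ℝ) / (4 * (Real.exp 1 - 2))) *
        ((1 / n) * ∑ j ∈ Finset.Icc 1 n, (P[R j|F (j - 1)]) ω
          - 2 * ((1 / n) * ∑ j ∈ Finset.Icc 1 n, R j ω))) ∂P) ≤ 1 := by
  have he : 2.7 < exp 1 := by linarith [exp_one_gt_d9]
  set l : ℝ := 1 / (4 * (exp 1 - 2))
  have hl0 : 0 ≤ l := div_nonneg zero_le_one (by linarith)
  have hl : l ≤ 1 / 2 := by
    rw [div_le_div_iff₀ (by linarith) (by norm_num)]
    linarith
  have hintegrand : ∀ ω, (n : ℝ) / (4 * (exp 1 - 2)) *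
      ((1 / n) * ∑ j ∈ Icc 1 n, P[R j|F (j - 1)] ω - 2 * ((1 / n) * ∑ j ∈ Icc 1 n, R j ω)) =
      ∑ j ∈ Icc 1 n, (l * P[R j|F (j - 1)] ω - 2 * l * R j ω) := by
    intro ω
    rcases Nat.eq_zero_or_pos n with rfl | hn
    · simp
    · rw [sum_sub_distrib, ← mul_sum, ← mul_sum]
      simp only [l]
      field_simp
  simp_rw [hintegrand]
  exact integral_compensatedExp_le_one hadp hbd hl0 hl n
end

section
/- For 1 < r < √2, every ε ∈ (0,1) and n ≥ ln(4)/ε, there is D ∈ ℕ and a probability measure μ on ℝ^D such that for X ~ μ^n the variance of the conditional missing mass satisfies Var(M̂(X,r)) ≥ 1/4 − ε. -/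
/-!
Put mass `p` uniformly on `D` points `e j` at pairwise distance `> r`, and mass `1 - p` on a
centre `o` within distance `r` of every `e j`; in `ℝ^D` take the standard basis and the origin,
with `p ^ n = 1/2`. With probability `p ^ n` no sample point is `o`: then `o` is covered but at
least `D - n` of the `e j` are not, so the missing mass is at least `p (1 - n / D)`. Otherwise
some sample point is `o`, whose `r`-ball covers the whole support, and the missing mass is `0`.
A quantity that is `≥ a` with probability `q` and `0` otherwise deviates from any constant by at
least `q (1 - q) a²` in mean square, and here `q (1 - q) a² ≈ 1/4`.
-/

open MeasureTheory Metric
open scoped ENNReal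

theorem mul_one_sub_mul_sq_le_sq_add {q a c : ℝ} (hq1 : q ≤ 1) (ha : 0 ≤ a) :
    q * (1 - q) * a ^ 2 ≤ q * max (a - c) 0 ^ 2 + (1 - q) * c ^ 2 := by
  rcases le_total c a with hca | hac
  · rw [max_eq_left (sub_nonneg.2 hca)]
    nlinarith [sq_nonneg (c - q * a)]
  · rw [max_eq_right (sub_nonpos.2 hac)]
    have hqa : q * a ^ 2 ≤ c ^ 2 := by nlinarith [mul_le_mul hac hac ha (ha.trans hac)]
    nlinarith [mul_le_mul_of_nonneg_left hqa (sub_nonneg.2 hq1)]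

theorem mul_one_sub_mul_sq_le_integral_sub_sq {Ω : Type*} [MeasurableSpace Ω] {ν : Measure Ω}
    [IsProbabilityMeasure ν] {f : Ω → ℝ} {E : Set Ω} {a : ℝ} (hf : MemLp f 2 ν)
    (hE : MeasurableSet E) (ha : 0 ≤ a) (hfE : ∀ᵐ x ∂ν, x ∈ E → a ≤ f x)
    (hfEc : ∀ᵐ x ∂ν, x ∉ E → f x = 0) (c : ℝ) :
    ν.real E * (1 - ν.real E) * a ^ 2 ≤ ∫ x, (f x - c) ^ 2 ∂ν := by
  set g : Ω → ℝ := E.indicator (fun _ => max (a - c) 0 ^ 2) + Eᶜ.indicator (fun _ => c ^ 2)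
  have hg_int : Integrable g ν :=
    ((integrable_const _).indicator hE).add ((integrable_const _).indicator hE.compl)
  have hg_le : g ≤ᵐ[ν] fun x => (f x - c) ^ 2 := by
    filter_upwards [hfE, hfEc] with x hxE hxEc
    by_cases hx : x ∈ E
    · have : max (a - c) 0 ≤ |f x - c| :=
        max_le ((sub_le_sub_right (hxE hx) c).trans (le_abs_self _)) (abs_nonneg _)
      simpa [g, hx] using pow_le_pow_left₀ (le_max_right _ _) this 2
    · simp [g, hx, hxEc hx]
  calc ν.real E * (1 - ν.real E) * a ^ 2
      ≤ ν.real E * max (a - c) 0 ^ 2 + (1 - ν.real E) * c ^ 2 :=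
        mul_one_sub_mul_sq_le_sq_add measureReal_le_one ha
    _ = ∫ x, g x ∂ν := by
        rw [integral_add' ((integrable_const _).indicator hE)
            ((integrable_const _).indicator hE.compl), integral_indicator_const _ hE,
          integral_indicator_const _ hE.compl, probReal_compl_eq_one_sub hE]
        simp
    _ ≤ ∫ x, (f x - c) ^ 2 ∂ν :=
        integral_mono_ae hg_int ((hf.sub (memLp_const c)).integrable_sq) hg_le

theorem Orthonormal.dist_eq_sqrt_two {ι F : Type*} [NormedAddCommGroup F] [InnerProductSpace ℝ F]
    {v : ι → F} (hv : Orthonormal ℝ v) {i j : ι} (hij : i ≠ j) :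
    dist (v i) (v j) = √2 := by
  rw [dist_eq_norm, ← Real.sqrt_sq (norm_nonneg _), norm_sub_sq_real, hv.1 i, hv.1 j, hv.2 hij]
  norm_num

section MissingMass

variable {X : Type*} [PseudoMetricSpace X] [MeasurableSpace X]

def missingMass {κ : Type*} (μ : Measure X) (r : ℝ) (x : κ → X) : ℝ≥0∞ :=
  μ (⋂ i, (closedBall (x i) r)ᶜ)

theorem measurable_missingMass {κ : Type*} [Countable κ] [SecondCountableTopology X]
    [OpensMeasurableSpace X] (μ : Measure X) [SFinite μ] (r : ℝ) :
    Measurable (missingMass μ r : (κ → X) → ℝ≥0∞) := by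
  have : MeasurableSet {q : (κ → X) × X | ∀ i, r < dist q.2 (q.1 i)} := by
    simp only [Set.ofPred_forall]
    exact .iInter fun i => measurableSet_lt measurable_const
      (measurable_snd.dist ((measurable_pi_apply i).comp measurable_fst))
  convert measurable_measure_prodMk_left (ν := μ) this using 1
  funext x
  exact congrArg μ (by ext y; simp)

end MissingMass

section StarMeasure

variable {X ι : Type*} [MeasurableSpace X] [MeasurableSingletonClass X]
  [Fintype ι] (e : ι → X) (o : X) (p : ℝ≥0∞)

noncomputable def starMeasure : Measure X :=
  (p / Fintype.card ι) • ∑ j, Measure.dirac (e j) + (1 - p) • Measure.dirac o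

theorem starMeasure_apply (s : Set X) :
    starMeasure e o p s =
      p / Fintype.card ι * ∑ j, s.indicator 1 (e j) + (1 - p) * s.indicator 1 o := by
  simp [starMeasure, Measure.dirac_apply]

theorem isProbabilityMeasure_starMeasure [Nonempty ι] (hp : p ≤ 1) :
    IsProbabilityMeasure (starMeasure e o p) := by
  constructor
  rw [starMeasure_apply]
  simp [ENNReal.div_mul_cancel, hp]

theorem starMeasure_range [Nonempty ι] (he : ∀ j, e j ≠ o) :
    starMeasure e o p (Set.range e) = p := by
  rw [starMeasure_apply]
  have ho : o ∉ Set.range e := fun ⟨j, hj⟩ => he j hj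
  simp [ENNReal.div_mul_cancel, ho]

theorem starMeasure_compl_insert_range :
    starMeasure e o p (insert o (Set.range e))ᶜ = 0 := by
  rw [starMeasure_apply]
  simp

end StarMeasure

section StarMissingMass

variable {X ι κ : Type*} [PseudoMetricSpace X] [MeasurableSpace X] [MeasurableSingletonClass X]
  [Fintype ι] {e : ι → X} {o : X} {r : ℝ} {p : ℝ≥0∞}

theorem missingMass_starMeasure_eq_zero (hr : 0 ≤ r) (hnear : ∀ j, dist (e j) o ≤ r)
    {x : κ → X} (hx : ∃ i, x i = o) : missingMass (starMeasure e o p) r x = 0 := by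
  obtain ⟨i, hi⟩ := hx
  refine measure_mono_null (fun y hy => ?_) (starMeasure_compl_insert_range e o p)
  have hy : r < dist y o := by simpa [hi] using Set.mem_iInter.1 hy i
  rintro (rfl | ⟨j, rfl⟩)
  · exact (dist_self y ▸ hy).not_ge hr
  · exact hy.not_ge (hnear j)

theorem le_missingMass_starMeasure [Fintype κ] (hfar : Pairwise fun j k => r < dist (e j) (e k))
    {x : κ → X} (hx : ∀ i, x i ∈ Set.range e) :
    p / Fintype.card ι * (Fintype.card ι - Fintype.card κ : ℕ) ≤
      missingMass (starMeasure e o p) r x := by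
  classical
  choose σ hσ using hx
  set C := ⋂ i, (closedBall (x i) r)ᶜ
  have hC : ∀ j ∉ Finset.univ.image σ, e j ∈ C := fun j hj => Set.mem_iInter.2 fun i => by
    have hji : j ≠ σ i := fun h => hj (h ▸ Finset.mem_image_of_mem σ (Finset.mem_univ i))
    simpa [← hσ i] using hfar hji
  have hcard : Fintype.card ι - Fintype.card κ ≤ (Finset.univ \ Finset.univ.image σ).card :=
    calc Fintype.card ι - Fintype.card κ ≤ Fintype.card ι - (Finset.univ.image σ).card :=
          Nat.sub_le_sub_left Finset.card_image_le _
      _ ≤ _ := Finset.le_card_sdiff _ _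
  rw [missingMass, starMeasure_apply]
  refine le_add_right (mul_le_mul_right ?_ _)
  calc ((Fintype.card ι - Fintype.card κ : ℕ) : ℝ≥0∞)
      ≤ ∑ j ∈ Finset.univ \ Finset.univ.image σ, C.indicator 1 (e j) := by
        rw [Finset.sum_congr rfl fun j hj =>
          Set.indicator_of_mem (hC j (Finset.mem_sdiff.1 hj).2) (1 : X → ℝ≥0∞)]
        simpa using (Nat.cast_le (α := ℝ≥0∞)).2 hcard
    _ ≤ ∑ j, C.indicator 1 (e j) := Finset.sum_le_sum_of_subset (Finset.subset_univ _)

theorem le_integral_missingMass_starMeasure_sub_sq [Fintype κ] [SecondCountableTopology X]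
    [OpensMeasurableSpace X] [Nonempty ι] (hp : p ≤ 1) (he : ∀ j, e j ≠ o)
    (hnear : ∀ j, dist (e j) o ≤ r) (hfar : Pairwise fun j k => r < dist (e j) (e k))
    (hκ : Fintype.card κ ≤ Fintype.card ι) (c : ℝ) :
    p.toReal ^ Fintype.card κ * (1 - p.toReal ^ Fintype.card κ) *
        (p.toReal * (1 - Fintype.card κ / Fintype.card ι)) ^ 2 ≤
      ∫ x, ((missingMass (starMeasure e o p) r x).toReal - c) ^ 2
        ∂(Measure.pi fun _ : κ => starMeasure e o p) := by
  have := isProbabilityMeasure_starMeasure e o p hp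
  set μ := starMeasure e o p
  have hsupp : ∀ᵐ x ∂(Measure.pi fun _ : κ => μ), ∀ i, x i ∈ insert o (Set.range e) :=
    ae_all_iff.2 fun _ => Measure.tendsto_eval_ae_ae.eventually <|
      (measure_eq_zero_iff_ae_notMem.1 (starMeasure_compl_insert_range e o p)).mono
        fun _ h => not_not.1 h
  set E : Set (κ → X) := Set.univ.pi fun _ => Set.range e
  have hE : MeasurableSet E := .univ_pi fun _ => (Set.finite_range e).measurableSet
  have hνE : (Measure.pi fun _ => μ).real E = p.toReal ^ Fintype.card κ := by
    simp [E, measureReal_def, Measure.pi_pi, μ, starMeasure_range e o p he]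
  have hι : (0 : ℝ) < Fintype.card ι := Nat.cast_pos.2 Fintype.card_pos
  rw [← hνE]
  refine mul_one_sub_mul_sq_le_integral_sub_sq ?_ hE ?_ ?_ ?_ c
  · refine memLp_of_bounded (a := 0) (b := 1) (.of_forall fun x =>
      ⟨ENNReal.toReal_nonneg, ENNReal.toReal_le_of_le_ofReal zero_le_one ?_⟩)
      (measurable_missingMass μ r).ennreal_toReal.aestronglyMeasurable 2
    exact ENNReal.ofReal_one ▸ prob_le_one (μ := μ)
  · exact mul_nonneg ENNReal.toReal_nonneg
      (sub_nonneg.2 ((div_le_one hι).2 (by exact_mod_cast hκ)))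
  · refine .of_forall fun x hx => ?_
    have h := ENNReal.toReal_mono (measure_ne_top _ _)
      (le_missingMass_starMeasure (o := o) (p := p) hfar fun i => hx i (Set.mem_univ i))
    rw [ENNReal.toReal_mul, ENNReal.toReal_div, ENNReal.toReal_natCast, ENNReal.toReal_natCast,
      Nat.cast_sub hκ] at h
    refine le_trans (le_of_eq ?_) h
    field_simp
  · filter_upwards [hsupp] with x hx hxE
    obtain ⟨i, hi⟩ : ∃ i, x i = o := by
      by_contra! h
      exact hxE fun i _ => (hx i).resolve_left (h i)
    rw [missingMass_starMeasure_eq_zero (dist_nonneg.trans (hnear (Classical.arbitrary ι)))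
      hnear ⟨i, hi⟩, ENNReal.toReal_zero]

end StarMissingMass

theorem exists_pow_eq_half_one_sub_le_sq {ε : ℝ} (hε : 0 < ε) {n : ℕ}
    (hn : Real.log 4 / ε ≤ n) : ∃ p : ℝ, 0 ≤ p ∧ p ≤ 1 ∧ p ^ n = 1 / 2 ∧ 1 - ε ≤ p ^ 2 := by
  have hlog2 : 0 < Real.log 2 := Real.log_pos one_lt_two
  have hn0 : (0 : ℝ) < n := lt_of_lt_of_le (by positivity) hn
  refine ⟨Real.exp (-Real.log 2 / n), (Real.exp_pos _).le,
    Real.exp_le_one_iff.2 (div_nonpos_of_nonpos_of_nonneg (by linarith) hn0.le), ?_, ?_⟩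
  · rw [← Real.exp_nat_mul, mul_div_cancel₀ _ hn0.ne', Real.exp_neg, Real.exp_log two_pos,
      one_div]
  · have hε' : Real.log 4 / n ≤ ε := by rwa [div_le_iff₀ hn0, mul_comm, ← div_le_iff₀ hε]
    calc 1 - ε ≤ -(Real.log 4 / n) + 1 := by linarith
      _ ≤ Real.exp (-(Real.log 4 / n)) := Real.add_one_le_exp _
      _ = Real.exp (-Real.log 2 / n) ^ 2 := by
        rw [← Real.exp_nat_mul, show (4 : ℝ) = 2 ^ 2 by norm_num, Real.log_pow]
        ring_nf

/-- Negative result: for `1 < r < √2`, `ε ∈ (0,1)` and `n ≥ ln 4 / ε` there is a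
dimension `D` and a probability measure `μ` on `ℝ^D` for which the variance of the
conditional missing mass is at least `1/4 - ε`. -/
theorem stmt11 (r ε : ℝ) (hr1 : 1 < r) (hr2 : r < Real.sqrt 2)
    (hε0 : 0 < ε) (hε1 : ε < 1) (n : ℕ) (hn : Real.log 4 / ε ≤ n) :
    ∃ (D : ℕ) (μ : Measure (EuclideanSpace ℝ (Fin D))), IsProbabilityMeasure μ ∧
      (∫ x : Fin n → EuclideanSpace ℝ (Fin D),
          ((μ (⋂ i, (closedBall (x i) r)ᶜ)).toReal -
            ∫ y : Fin n → EuclideanSpace ℝ (Fin D),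
              (μ (⋂ i, (closedBall (y i) r)ᶜ)).toReal ∂(Measure.pi fun _ => μ)) ^ 2
          ∂(Measure.pi fun _ => μ)) ≥ 1 / 4 - ε := by
  obtain ⟨p, hp0, hp1, hpn, hp2⟩ := exists_pow_eq_half_one_sub_le_sq hε0 hn
  obtain ⟨D, hD⟩ := exists_nat_gt ((n : ℝ) / ε)
  have hD0 : (0 : ℝ) < D := lt_of_le_of_lt (by positivity) hD
  have hnD : (n : ℝ) / D ≤ ε := by rw [div_lt_iff₀ hε0] at hD; rw [div_le_iff₀ hD0]; linarith
  have : Nonempty (Fin D) := ⟨⟨0, by exact_mod_cast hD0⟩⟩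
  have hv := EuclideanSpace.orthonormal_single (𝕜 := ℝ) (ι := Fin D)
  have hp : ENNReal.ofReal p ≤ 1 := ENNReal.ofReal_le_one.2 hp1
  refine ⟨D, starMeasure (fun j : Fin D => EuclideanSpace.single j (1 : ℝ)) 0 (ENNReal.ofReal p),
    isProbabilityMeasure_starMeasure _ _ _ hp, ?_⟩
  refine ge_iff_le.2 (le_trans ?_ (le_integral_missingMass_starMeasure_sub_sq (κ := Fin n) hp
    (fun j => hv.ne_zero j) (fun j => by rw [dist_zero_right, hv.1 j]; exact hr1.le)
    (fun j k hjk => hr2.trans_le (hv.dist_eq_sqrt_two hjk).ge)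
    (by simpa using (Nat.cast_le (α := ℝ)).1 ((div_le_one hD0).1 (hnD.trans hε1.le))) _))
  simp only [ENNReal.toReal_ofReal hp0, hpn, Fintype.card_fin]
  have h1 : (1 - ε) ^ 2 ≤ (1 - n / D) ^ 2 :=
    pow_le_pow_left₀ (by linarith) (by linarith) 2
  have h2 : (1 - ε) ^ 3 ≤ (p * (1 - n / D)) ^ 2 := by
    rw [mul_pow, pow_succ']
    exact mul_le_mul hp2 h1 (sq_nonneg _) (sq_nonneg _)
  nlinarith [mul_nonneg (sq_nonneg ε) (by linarith : 0 ≤ 3 - ε)]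
end

section
/- The complementary missing mass M̂^⊥(x) = μ(∪_{i∈[n]} B(x_i,r)) is (1,0)-self-bounded: for every x ∈ X^n, ∑_{k=1}^n ( M̂^⊥(x) − inf_{y∈X} M̂^⊥(S^k_y x) ) ≤ M̂^⊥(x), where S^k_y x replaces the k-th coordinate of x by y. -/
open MeasureTheory Metric

/-!
Let `U` be the union of the balls and `V k` the union of all balls except the `k`-th one.
Replacing the `k`-th center cannot shrink the union below `V k`, so the `k`-th term of the sum is
at most `μ (U \ V k)`, the mass covered by the `k`-th ball alone. These sets are pairwise disjoint
and lie in `U`, hence their masses add up to at most `μ U`.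
-/

namespace Set

variable {α ι : Type*}

theorem pairwise_disjoint_sdiff_iUnion_ne (s : ι → Set α) :
    Pairwise (Function.onFun Disjoint fun k => s k \ ⋃ i ≠ k, s i) := by
  intro k j hkj
  refine disjoint_left.2 fun z hzk hzj => hzj.2 ?_
  exact mem_biUnion (x := k) hkj hzk.1

theorem iUnion_sdiff_iUnion_ne_subset (s : ι → Set α) (k : ι) :
    (⋃ i, s i) \ (⋃ i ≠ k, s i) ⊆ s k \ ⋃ i ≠ k, s i := by
  rintro z ⟨hz, hzV⟩
  obtain ⟨i, hi⟩ := mem_iUnion.1 hz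
  obtain rfl : i = k := by_contra fun hik => hzV (mem_biUnion hik hi)
  exact ⟨hi, hzV⟩

theorem iUnion_ne_subset_iUnion_update {β : Type*} [DecidableEq ι] (f : β → Set α)
    (x : ι → β) (k : ι) (y : β) :
    ⋃ i ≠ k, f (x i) ⊆ ⋃ i, f (Function.update x k y i) :=
  iUnion₂_subset fun i hik => by
    rw [← Function.update_of_ne hik y x]
    exact subset_iUnion (fun i => f (Function.update x k y i)) i

end Set

theorem MeasureTheory.sum_measureReal_iUnion_sub_iUnion_ne_le {α ι : Type*} [MeasurableSpace α]
    [Fintype ι] (μ : Measure α) [IsFiniteMeasure μ] {s : ι → Set α}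
    (hs : ∀ i, MeasurableSet (s i)) :
    ∑ k, (μ.real (⋃ i, s i) - μ.real (⋃ i ≠ k, s i)) ≤ μ.real (⋃ i, s i) :=
  calc ∑ k, (μ.real (⋃ i, s i) - μ.real (⋃ i ≠ k, s i))
      ≤ ∑ k, μ.real (s k \ ⋃ i ≠ k, s i) := Finset.sum_le_sum fun k _ =>
        (le_measureReal_sdiff (measure_ne_top μ _)).trans
          (measureReal_mono (Set.iUnion_sdiff_iUnion_ne_subset s k))
    _ = μ.real (⋃ k, s k \ ⋃ i ≠ k, s i) :=
        (measureReal_iUnion_fintype (Set.pairwise_disjoint_sdiff_iUnion_ne s) fun k =>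
          (hs k).diff (.biUnion (Set.to_countable _) fun i _ => hs i)).symm
    _ ≤ μ.real (⋃ i, s i) := measureReal_mono (Set.iUnion_mono fun _ => Set.sdiff_subset)

theorem stmt13_general {X : Type*} [MetricSpace X]
    [MeasurableSpace X] [BorelSpace X]
    (μ : Measure X) [IsProbabilityMeasure μ] (n : ℕ) (r : ℝ) (x : Fin n → X) :
    ∑ k : Fin n,
        ((μ (⋃ i, closedBall (x i) r)).toReal -
          ⨅ y : X, (μ (⋃ i, closedBall (Function.update x k y i) r)).toReal)
      ≤ (μ (⋃ i, closedBall (x i) r)).toReal := by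
  refine le_trans (Finset.sum_le_sum fun k _ => ?_)
    (sum_measureReal_iUnion_sub_iUnion_ne_le μ fun _ => measurableSet_closedBall)
  have : Nonempty X := ⟨x k⟩
  exact sub_le_sub_left (le_ciInf fun y => measureReal_mono (μ := μ)
    (Set.iUnion_ne_subset_iUnion_update (fun c => closedBall c r) x k y)) _

/-- The envelope (complementary missing) mass `M̂⊥(x) = μ(⋃_i B(x_i,r))` is
`(1,0)`-self-bounded: `∑_k (M̂⊥(x) - inf_y M̂⊥(S^k_y x)) ≤ M̂⊥(x)`. -/
theorem stmt13 {X : Type*} [MetricSpace X] [Nonempty X]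
    [MeasurableSpace X] [BorelSpace X]
    (μ : Measure X) [IsProbabilityMeasure μ] (n : ℕ) (r : ℝ) (x : Fin n → X) :
    ∑ k : Fin n,
        ((μ (⋃ i, closedBall (x i) r)).toReal -
          ⨅ y : X, (μ (⋃ i, closedBall (Function.update x k y i) r)).toReal)
      ≤ (μ (⋃ i, closedBall (x i) r)).toReal :=
  stmt13_general μ n r x
end

section
/- The complementary Good–Turing statistic G^⊥(x) = (1/n) ∑_{j=1}^n 1{x_j ∈ ∪_{i≠j} B(x_i,r)} is (2,0)-self-bounded, and moreover for every k and x, G^⊥(x) − inf_y G^⊥(S^k_y x) ≤ (1 + h(x,r))/n, where h(x,r) is the largest cardinality of a subsequence of x whose points are pairwise separated by more than r but all contained in some closed ball of radius r. -/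
open Metric
open scoped Classical

/-- `locSep x r` is the largest cardinality of a subsequence of `x` whose points are
pairwise separated by more than `r` but all contained in some closed ball of radius `r`. -/
noncomputable def locSep {X : Type*} [MetricSpace X] {n : ℕ} (x : Fin n → X) (r : ℝ) : ℕ :=
  sSup {k | ∃ S : Finset (Fin n), S.card = k ∧
    (∃ y : X, ∀ i ∈ S, dist y (x i) ≤ r) ∧
    (∀ i ∈ S, ∀ j ∈ S, i ≠ j → r < dist (x i) (x j))}

/-- The complementary Good–Turing statistic `G⊥(x) = (1/n)∑_j 1{x_j ∈ ⋃_{i≠j} B(x_i,r)}`. -/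
noncomputable def Gperp {X : Type*} [MetricSpace X] {n : ℕ} (r : ℝ) (x : Fin n → X) : ℝ :=
  (1 / n) * ∑ j : Fin n,
    (if ∃ i : Fin n, i ≠ j ∧ dist (x j) (x i) ≤ r then (1 : ℝ) else 0)

/-!
Moving the single point `x k` can only isolate `x k` itself and those `x j` whose unique
`r`-neighbour is `x k`; call these indices *fragile* at `k`. Apart from `k`, the fragile points
are `r`-separated and lie in the ball of radius `r` around `x k`, so there are at most
`h(x,r)` of them. Conversely, a non-isolated `x j` with some neighbour `x i` can only be
fragile at `j` and at `i`, so double counting bounds the total number of fragile pairs by twice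
the number of non-isolated points, which is `2 n G⊥(x)`.
-/

open Finset Function

namespace GoodTuring

section

variable {ι X : Type*} [Fintype ι] [PseudoMetricSpace X] (r : ℝ)

noncomputable def nonIsolated (x : ι → X) : Finset ι :=
  {j | ∃ i, i ≠ j ∧ dist (x j) (x i) ≤ r}

noncomputable def fragile (x : ι → X) (k : ι) : Finset ι :=
  {j ∈ nonIsolated r x | j = k ∨ ∀ i, i ≠ j → i ≠ k → r < dist (x j) (x i)}

variable {r}

lemma fragile_subset_nonIsolated (x : ι → X) (k : ι) : fragile r x k ⊆ nonIsolated r x :=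
  filter_subset _ _

lemma lt_dist_of_mem_fragile {x : ι → X} {i j k : ι} (hj : j ∈ fragile r x k) (hjk : j ≠ k)
    (hij : i ≠ j) (hik : i ≠ k) : r < dist (x j) (x i) :=
  ((mem_filter.mp hj).2.resolve_left hjk) i hij hik

lemma dist_le_of_mem_fragile {x : ι → X} {j k : ι} (hj : j ∈ fragile r x k) (hjk : j ≠ k) :
    dist (x j) (x k) ≤ r := by
  obtain ⟨i, hij, hi⟩ := by simpa [nonIsolated] using fragile_subset_nonIsolated x k hj
  obtain rfl : i = k := by
    by_contra hik
    exact (lt_dist_of_mem_fragile hj hjk hij hik).not_ge hi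
  exact hi

lemma sdiff_fragile_subset_nonIsolated_update [DecidableEq ι] (x : ι → X) (k : ι) (y : X) :
    nonIsolated r x \ fragile r x k ⊆ nonIsolated r (update x k y) := by
  intro j hj
  obtain ⟨hj, hjf⟩ := mem_sdiff.mp hj
  simp only [fragile, mem_filter, hj, true_and, not_or, not_forall, not_lt] at hjf
  obtain ⟨hjk, i, hij, hik, hi⟩ := hjf
  simp only [nonIsolated, mem_filter, mem_univ, true_and]
  exact ⟨i, hij, by rwa [update_of_ne hjk, update_of_ne hik]⟩

lemma card_nonIsolated_le_update_add_card_fragile [DecidableEq ι] (x : ι → X) (k : ι) (y : X) :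
    #(nonIsolated r x) ≤ #(nonIsolated r (update x k y)) + #(fragile r x k) :=
  card_le_card_sdiff_add_card.trans <|
    Nat.add_le_add_right (card_le_card (sdiff_fragile_subset_nonIsolated_update x k y)) _

lemma card_filter_mem_fragile_le_two (x : ι → X) (j : ι) :
    #{k | j ∈ fragile r x k} ≤ 2 := by
  by_cases hj : j ∈ nonIsolated r x
  · obtain ⟨i, hij, hi⟩ := by simpa [nonIsolated] using hj
    refine (card_le_card fun k hk => ?_).trans (card_le_two (a := j) (b := i))
    by_contra hk'
    simp only [mem_insert, mem_singleton, not_or] at hk'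
    exact (lt_dist_of_mem_fragile (mem_filter.mp hk).2 (Ne.symm hk'.1) hij
      (Ne.symm hk'.2)).not_ge hi
  · simp [fun k => mt (fun h => fragile_subset_nonIsolated x k h) hj]

lemma sum_card_fragile_le (x : ι → X) :
    ∑ k, #(fragile r x k) ≤ 2 * #(nonIsolated r x) := by
  let R : ι → ι → Prop := fun k j => j ∈ fragile r x k
  have hR : ∀ k, (nonIsolated r x).bipartiteAbove R k = fragile r x k := fun k =>
    (filter_mem_eq_inter).trans (inter_eq_right.mpr (fragile_subset_nonIsolated x k))
  calc ∑ k, #(fragile r x k)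
      = ∑ k, #((nonIsolated r x).bipartiteAbove R k) := by simp only [hR]
    _ = ∑ j ∈ nonIsolated r x, #(univ.bipartiteBelow R j) :=
        sum_card_bipartiteAbove_eq_sum_card_bipartiteBelow R
    _ ≤ #(nonIsolated r x) • 2 :=
        sum_le_card_nsmul _ _ _ fun j _ => card_filter_mem_fragile_le_two x j
    _ = 2 * #(nonIsolated r x) := smul_eq_mul _ _ |>.trans (mul_comm _ _)

end

variable {X : Type*} [MetricSpace X] {n : ℕ} {r : ℝ}

lemma card_fragile_le_one_add_locSep (x : Fin n → X) (k : Fin n) :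
    #(fragile r x k) ≤ 1 + locSep x r := by
  have hsep : #((fragile r x k).erase k) ≤ locSep x r := by
    refine le_csSup ⟨n, ?_⟩ ⟨_, rfl, ⟨x k, fun j hj => ?_⟩, fun i hi j hj hij => ?_⟩
    · rintro _ ⟨S, rfl, -⟩
      simpa using card_le_univ S
    · rw [dist_comm]
      exact dist_le_of_mem_fragile (mem_of_mem_erase hj) (ne_of_mem_erase hj)
    · exact lt_dist_of_mem_fragile (mem_of_mem_erase hi) (ne_of_mem_erase hi) hij.symm
        (ne_of_mem_erase hj)
  have := pred_card_le_card_erase (s := fragile r x k) (a := k)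
  omega

lemma Gperp_eq_card_div (x : Fin n → X) : Gperp r x = #(nonIsolated r x) / n := by
  rw [Gperp, sum_boole, one_div_mul_eq_div, nonIsolated]
  congr

lemma Gperp_sub_iInf_update_le (x : Fin n → X) (k : Fin n) :
    Gperp r x - ⨅ y, Gperp r (update x k y) ≤ #(fragile r x k) / n := by
  have : Nonempty X := ⟨x k⟩
  rw [sub_le_comm]
  refine le_ciInf fun y => ?_
  rw [Gperp_eq_card_div, Gperp_eq_card_div, sub_le_iff_le_add, ← add_div]
  gcongr
  exact_mod_cast card_nonIsolated_le_update_add_card_fragile x k y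

end GoodTuring

open GoodTuring in
theorem stmt14_general {X : Type*} [MetricSpace X] (n : ℕ) (r : ℝ) :
    (∀ x : Fin n → X,
      ∑ k : Fin n, (Gperp r x - ⨅ y : X, Gperp r (Function.update x k y))
        ≤ 2 * Gperp r x) ∧
    (∀ (x : Fin n → X) (k : Fin n),
      Gperp r x - ⨅ y : X, Gperp r (Function.update x k y)
        ≤ (1 + (locSep x r : ℝ)) / n) := by
  refine ⟨fun x => ?_, fun x k => ?_⟩
  · calc ∑ k, (Gperp r x - ⨅ y, Gperp r (update x k y))
        ≤ ∑ k, (#(fragile r x k) : ℝ) / n :=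
          sum_le_sum fun k _ => Gperp_sub_iInf_update_le x k
      _ = ((∑ k, #(fragile r x k) : ℕ) : ℝ) / n := by push_cast; rw [sum_div]
      _ ≤ ((2 * #(nonIsolated r x) : ℕ) : ℝ) / n := by gcongr; exact sum_card_fragile_le x
      _ = 2 * Gperp r x := by rw [Gperp_eq_card_div]; push_cast; ring
  · refine (Gperp_sub_iInf_update_le x k).trans ?_
    gcongr
    exact_mod_cast card_fragile_le_one_add_locSep x k

/-- `G⊥` is `(2,0)`-self-bounded, and each coordinate-wise decrement is bounded by
`(1 + h(x,r))/n`. -/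
theorem stmt14 {X : Type*} [MetricSpace X] [Nonempty X] (n : ℕ) (hn : 0 < n) (r : ℝ) :
    (∀ x : Fin n → X,
      ∑ k : Fin n, (Gperp r x - ⨅ y : X, Gperp r (Function.update x k y))
        ≤ 2 * Gperp r x) ∧
    (∀ (x : Fin n → X) (k : Fin n),
      Gperp r x - ⨅ y : X, Gperp r (Function.update x k y)
        ≤ (1 + (locSep x r : ℝ)) / n) :=
  stmt14_general n r
end

section
/- Suppose X ≥ 0 is a random variable, w, λ > 0, b ≥ 0, and for all t > 0, P{X > w + t} ≤ b e^{−λt}. Then for every p ≥ 1, ‖X‖_p ≤ 2λ^{−1} b^{1/p} p + w. -/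
/-!
Split `X ≤ (X - w)⁺ + w`. For `Z = (X - w)⁺` the layer-cake formula gives
`E[Z^p] = p ∫₀^∞ t^(p-1) P{Z > t} dt`, and the pointwise bound
`t^(p-1) e^(-λt) ≤ (2p/λ)^(p-1) e^(-λt/2)` (from `log s ≤ s - 1`) turns this into
`E[Z^p] ≤ b (2p/λ)^p`. Minkowski's inequality in `L^p` then adds `‖w‖_p = w`.
-/

open MeasureTheory Set Real

lemma lintegral_ofReal_exp_neg_mul_Ioi {c : ℝ} (hc : 0 < c) :
    ∫⁻ t in Ioi (0 : ℝ), ENNReal.ofReal (exp (-(c * t))) = ENNReal.ofReal c⁻¹ := by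
  have hint : IntegrableOn (fun t => exp (-(c * t))) (Ioi 0) := by
    simpa only [neg_mul] using exp_neg_integrableOn_Ioi 0 hc
  rw [← ofReal_integral_eq_lintegral_ofReal hint (ae_of_all _ fun _ => (exp_pos _).le),
    integral_comp_mul_left_Ioi (fun t => exp (-t)) 0 hc, mul_zero, integral_exp_neg_Ioi_zero,
    smul_eq_mul, mul_one]

lemma rpow_le_exp_mul {s q : ℝ} (hs : 0 < s) (hq : 0 ≤ q) : s ^ q ≤ exp (q * s) := by
  rw [rpow_def_of_pos hs, mul_comm]
  gcongr
  linarith [log_le_sub_one_of_pos hs]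

lemma rpow_sub_one_mul_exp_neg_le {p l t : ℝ} (hp : 1 ≤ p) (hl : 0 < l) (ht : 0 < t) :
    t ^ (p - 1) * exp (-(l * t)) ≤ (2 * p / l) ^ (p - 1) * exp (-(l / 2 * t)) := by
  have hp0 : 0 < p := by linarith
  set s := l * t / (2 * p) with hs_def
  have hs : 0 < s := by positivity
  have hts : t ^ (p - 1) = (2 * p / l) ^ (p - 1) * s ^ (p - 1) := by
    rw [← mul_rpow (by positivity) hs.le, hs_def]
    field_simp
  have hexp : (p - 1) * s + -(l * t) ≤ -(l / 2 * t) := by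
    have hps : p * s = l * t / 2 := by rw [hs_def]; field_simp
    nlinarith
  calc t ^ (p - 1) * exp (-(l * t))
      ≤ (2 * p / l) ^ (p - 1) * exp ((p - 1) * s) * exp (-(l * t)) := by
        rw [hts]
        gcongr
        exact rpow_le_exp_mul hs (by linarith)
    _ = (2 * p / l) ^ (p - 1) * exp ((p - 1) * s + -(l * t)) := by rw [mul_assoc, exp_add]
    _ ≤ (2 * p / l) ^ (p - 1) * exp (-(l / 2 * t)) := by gcongr

section TailToMoment

variable {α : Type*} [MeasurableSpace α] {μ : Measure α} {Z : α → ℝ} {b l p : ℝ}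

lemma lintegral_rpow_le_of_meas_lt_le_exp (hZ : 0 ≤ᵐ[μ] Z) (hZm : AEMeasurable Z μ)
    (hb : 0 ≤ b) (hl : 0 < l) (hp : 1 ≤ p)
    (htail : ∀ t > 0, μ {a | t < Z a} ≤ ENNReal.ofReal (b * exp (-(l * t)))) :
    ∫⁻ a, ENNReal.ofReal (Z a ^ p) ∂μ ≤ ENNReal.ofReal (b * (2 * p / l) ^ p) := by
  have hp0 : 0 < p := by linarith
  have hpt : ∀ t ∈ Ioi (0 : ℝ), μ {a | t < Z a} * ENNReal.ofReal (t ^ (p - 1))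
      ≤ ENNReal.ofReal (b * (2 * p / l) ^ (p - 1)) * ENNReal.ofReal (exp (-(l / 2 * t))) := by
    intro t ht
    calc μ {a | t < Z a} * ENNReal.ofReal (t ^ (p - 1))
        ≤ ENNReal.ofReal (b * exp (-(l * t))) * ENNReal.ofReal (t ^ (p - 1)) := by
          gcongr; exact htail t ht
      _ = ENNReal.ofReal (b * (t ^ (p - 1) * exp (-(l * t)))) := by
          rw [← ENNReal.ofReal_mul (by positivity)]; ring_nf
      _ ≤ ENNReal.ofReal (b * ((2 * p / l) ^ (p - 1) * exp (-(l / 2 * t)))) :=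
          ENNReal.ofReal_le_ofReal
            (mul_le_mul_of_nonneg_left (rpow_sub_one_mul_exp_neg_le hp hl ht) hb)
      _ = _ := by rw [← ENNReal.ofReal_mul (by positivity), mul_assoc]
  calc ∫⁻ a, ENNReal.ofReal (Z a ^ p) ∂μ
      = ENNReal.ofReal p * ∫⁻ t in Ioi 0, μ {a | t < Z a} * ENNReal.ofReal (t ^ (p - 1)) :=
        lintegral_rpow_eq_lintegral_meas_lt_mul μ hZ hZm hp0
    _ ≤ ENNReal.ofReal p * ∫⁻ t in Ioi 0,
          ENNReal.ofReal (b * (2 * p / l) ^ (p - 1)) * ENNReal.ofReal (exp (-(l / 2 * t))) :=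
        mul_le_mul_right (setLIntegral_mono' measurableSet_Ioi hpt) _
    _ = ENNReal.ofReal (p * (b * (2 * p / l) ^ (p - 1) * (l / 2)⁻¹)) := by
        rw [lintegral_const_mul' _ _ ENNReal.ofReal_ne_top,
          lintegral_ofReal_exp_neg_mul_Ioi (by positivity), ← ENNReal.ofReal_mul (by positivity),
          ← ENNReal.ofReal_mul hp0.le]
    _ = ENNReal.ofReal (b * (2 * p / l) ^ p) := by
        rw [rpow_sub_one (by positivity)]
        field_simp

lemma eLpNorm_le_of_meas_lt_le_exp (hZ : 0 ≤ᵐ[μ] Z) (hZm : AEMeasurable Z μ)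
    (hb : 0 ≤ b) (hl : 0 < l) (hp : 1 ≤ p)
    (htail : ∀ t > 0, μ {a | t < Z a} ≤ ENNReal.ofReal (b * exp (-(l * t)))) :
    eLpNorm Z (ENNReal.ofReal p) μ ≤ ENNReal.ofReal (b ^ (1 / p) * (2 * p / l)) := by
  have hp0 : 0 < p := by linarith
  have hZp : ∫⁻ a, ‖Z a‖ₑ ^ p ∂μ = ∫⁻ a, ENNReal.ofReal (Z a ^ p) ∂μ :=
    lintegral_congr_ae <| hZ.mono fun a (ha : 0 ≤ Z a) => by
      dsimp only
      rw [Real.enorm_of_nonneg ha, ENNReal.ofReal_rpow_of_nonneg ha hp0.le]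
  rw [eLpNorm_eq_lintegral_rpow_enorm_toReal (by simpa using hp0) ENNReal.ofReal_ne_top,
    ENNReal.toReal_ofReal hp0.le, hZp]
  calc (∫⁻ a, ENNReal.ofReal (Z a ^ p) ∂μ) ^ (1 / p)
      ≤ ENNReal.ofReal (b * (2 * p / l) ^ p) ^ (1 / p) := by
        gcongr
        exact lintegral_rpow_le_of_meas_lt_le_exp hZ hZm hb hl hp htail
    _ = ENNReal.ofReal (b ^ (1 / p) * (2 * p / l)) := by
        rw [ENNReal.ofReal_rpow_of_nonneg (by positivity) (by positivity),
          mul_rpow hb (by positivity), ← rpow_mul (by positivity), mul_one_div_cancel hp0.ne',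
          rpow_one]

lemma eLpNorm_le_of_meas_gt_add_le_exp [IsProbabilityMeasure μ] {Y : α → ℝ} {w : ℝ}
    (hY : 0 ≤ᵐ[μ] Y) (hYm : AEMeasurable Y μ) (hw : 0 ≤ w) (hb : 0 ≤ b) (hl : 0 < l)
    (hp : 1 ≤ p)
    (htail : ∀ t > 0, μ {a | w + t < Y a} ≤ ENNReal.ofReal (b * exp (-(l * t)))) :
    eLpNorm Y (ENNReal.ofReal p) μ ≤ ENNReal.ofReal (b ^ (1 / p) * (2 * p / l) + w) := by
  set Z : α → ℝ := fun a => max (Y a - w) 0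
  have hZm : AEMeasurable Z μ := (hYm.sub_const w).max aemeasurable_const
  have hZ : eLpNorm Z (ENNReal.ofReal p) μ ≤ ENNReal.ofReal (b ^ (1 / p) * (2 * p / l)) := by
    refine eLpNorm_le_of_meas_lt_le_exp (ae_of_all _ fun a => le_max_right _ _) hZm hb hl hp
      fun t ht => ?_
    have hset : {a | t < Z a} = {a | w + t < Y a} := by
      ext a
      simp only [Z, mem_ofPred_eq, lt_max_iff, ht.not_gt, or_false]
      constructor <;> intro <;> linarith
    exact hset ▸ htail t ht
  calc eLpNorm Y (ENNReal.ofReal p) μ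
      ≤ eLpNorm (Z + fun _ => w) (ENNReal.ofReal p) μ :=
        eLpNorm_mono_ae_real <| hY.mono fun a (ha : 0 ≤ Y a) => by
          simp only [Z, Pi.add_apply, Real.norm_of_nonneg ha]
          linarith [le_max_left (Y a - w) 0]
    _ ≤ eLpNorm Z (ENNReal.ofReal p) μ + eLpNorm (fun _ => w) (ENNReal.ofReal p) μ :=
        eLpNorm_add_le hZm.aestronglyMeasurable aestronglyMeasurable_const (by simpa using hp)
    _ ≤ ENNReal.ofReal (b ^ (1 / p) * (2 * p / l)) + ENNReal.ofReal w := by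
        rw [eLpNorm_const _ (ENNReal.ofReal_pos.2 (by linarith)).ne'
            (IsProbabilityMeasure.ne_zero μ), measure_univ, ENNReal.one_rpow, mul_one,
          Real.enorm_of_nonneg hw]
        gcongr
    _ = ENNReal.ofReal (b ^ (1 / p) * (2 * p / l) + w) :=
        (ENNReal.ofReal_add (by positivity) hw).symm

end TailToMoment

/-- Converting an exponential tail bound into a moment bound:
if `P{X > w + t} ≤ b e^{-λ t}` for all `t > 0`, then `‖X‖_p ≤ 2 λ⁻¹ b^{1/p} p + w`. -/
theorem stmt15 {Ω : Type*} [MeasurableSpace Ω] (P : Measure Ω) [IsProbabilityMeasure P]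
    (Y : Ω → ℝ) (hY : ∀ ω, 0 ≤ Y ω)
    (w l b p : ℝ) (hw : 0 < w) (hl : 0 < l) (hb : 0 ≤ b) (hp : 1 ≤ p)
    (htail : ∀ t > 0, (P {ω | Y ω > w + t}).toReal ≤ b * Real.exp (-l * t)) :
    (∫ ω, |Y ω| ^ p ∂P) ^ (1 / p) ≤ 2 * l⁻¹ * b ^ (1 / p) * p + w := by
  have hp0 : 0 < p := by linarith
  have hp' : ENNReal.ofReal p ≠ 0 := by simpa using hp0
  by_cases hint : Integrable (fun ω => |Y ω| ^ p) P
  swap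
  · rw [integral_undef hint, zero_rpow (one_div_pos.2 hp0).ne']
    positivity
  have hYm : AEMeasurable Y P :=
    (hint.aemeasurable.pow_const p⁻¹).congr <| ae_of_all _ fun ω => by
      simp only [abs_of_nonneg (hY ω), rpow_rpow_inv (hY ω) hp0.ne']
  have hmem : MemLp Y (ENNReal.ofReal p) P :=
    (integrable_norm_rpow_iff hYm.aestronglyMeasurable hp' ENNReal.ofReal_ne_top).1 <| by
      simpa [ENNReal.toReal_ofReal hp0.le] using hint
  have hYp := eLpNorm_le_of_meas_gt_add_le_exp (ae_of_all _ hY) hYm hw.le hb hl hp fun t ht =>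
    (ENNReal.le_ofReal_iff_toReal_le (measure_ne_top _ _) (by positivity)).2 <| by
      simpa only [neg_mul] using htail t ht
  rw [hmem.eLpNorm_eq_integral_rpow_norm hp' ENNReal.ofReal_ne_top, ENNReal.toReal_ofReal hp0.le,
    ENNReal.ofReal_le_ofReal_iff (by positivity)] at hYp
  calc (∫ ω, |Y ω| ^ p ∂P) ^ (1 / p)
      = (∫ ω, ‖Y ω‖ ^ p ∂P) ^ p⁻¹ := by simp only [Real.norm_eq_abs, one_div]
    _ ≤ b ^ (1 / p) * (2 * p / l) + w := hYp
    _ = 2 * l⁻¹ * b ^ (1 / p) * p + w := by ring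
end

section
/- If X_1, X_2, ... are iid from a Borel probability measure μ on a separable metric space (X,d) and r > 0, then the conditional missing mass M̂(X_1^n, r) = μ(∩_{i=1}^n B(X_i,r)^c) converges to 0 almost surely as n → ∞. -/
/-!
Cover `S` by the countably many balls `ball (u k) (r / 2)` around a dense sequence `u`. A ball of
positive mass is hit by some `X i` almost surely, because the probability of missing it during
the first `n` draws decays geometrically. On that event every point `y` outside all the balls
`closedBall (X i ω) r` lies in a null ball `ball (u k) (r / 2)`: if that ball contained some
`X i ω`, then `dist y (X i ω) < r`. So the missing mass decreases to the measure of a null set.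
-/

open MeasureTheory Metric Filter ProbabilityTheory

theorem tendsto_measure_biInter_range {α : Type*} [MeasurableSpace α] {μ : Measure α}
    {s : ℕ → Set α} (hs : ∀ i, NullMeasurableSet (s i) μ) (hfin : ∃ i, μ (s i) ≠ ⊤) :
    Tendsto (fun n ↦ μ (⋂ i ∈ Finset.range n, s i)) atTop (nhds (μ (⋂ i, s i))) := by
  rw [← tendsto_add_atTop_iff_nat 1]
  have hrange (n : ℕ) : ⋂ i ∈ Finset.range (n + 1), s i = ⋂ i ≤ n, s i := by
    ext; simp
  simpa only [hrange] using tendsto_measure_iInter_le hs hfin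

theorem ae_exists_mem_of_iIndepFun {S Ω : Type*} [MeasurableSpace S] [MeasurableSpace Ω]
    {μ : Measure S} [IsProbabilityMeasure μ] {P : Measure Ω} {X : ℕ → Ω → S}
    (hmeas : ∀ i, Measurable (X i)) (hindep : iIndepFun X P)
    (hident : ∀ i, P.map (X i) = μ) {B : Set S} (hB : MeasurableSet B) (hB0 : μ B ≠ 0) :
    ∀ᵐ ω ∂P, ∃ i, X i ω ∈ B := by
  have hmiss (n : ℕ) : P (⋂ i ∈ Finset.range n, X i ⁻¹' Bᶜ) = μ Bᶜ ^ n := by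
    have hlaw (i : ℕ) : P (X i ⁻¹' Bᶜ) = μ Bᶜ := by
      rw [← hident i, Measure.map_apply (hmeas i) hB.compl]
    rw [hindep.measure_inter_preimage_eq_mul _ (fun _ _ ↦ hB.compl),
      Finset.prod_congr rfl fun i _ ↦ hlaw i, Finset.prod_const, Finset.card_range]
  have hlt : μ Bᶜ < 1 := by
    rw [prob_compl_eq_one_sub hB]
    exact ENNReal.sub_lt_self ENNReal.one_ne_top one_ne_zero hB0
  have hle (n : ℕ) : P {ω | ¬∃ i, X i ω ∈ B} ≤ μ Bᶜ ^ n :=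
    hmiss n ▸ measure_mono fun ω hω ↦ Set.mem_iInter₂.2 fun i _ hi ↦ hω ⟨i, hi⟩
  rw [ae_iff]
  exact le_antisymm (ge_of_tendsto' (ENNReal.tendsto_pow_atTop_nhds_zero_of_lt_one hlt) hle)
    zero_le

theorem measure_iInter_compl_closedBall_eq_zero {S κ ι : Type*} [PseudoMetricSpace S]
    [MeasurableSpace S] {μ : Measure S} [Countable κ] {u : κ → S} (hu : DenseRange u)
    {r : ℝ} (hr : 0 < r) {x : ι → S}
    (hx : ∀ k, μ (ball (u k) (r / 2)) ≠ 0 → ∃ i, x i ∈ ball (u k) (r / 2)) :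
    μ (⋂ i, (closedBall (x i) r)ᶜ) = 0 := by
  have hcover : ⋂ i, (closedBall (x i) r)ᶜ ⊆
      ⋃ k ∈ {k | μ (ball (u k) (r / 2)) = 0}, ball (u k) (r / 2) := by
    intro y hy
    obtain ⟨k, hyk⟩ := denseRange_iff.1 hu y (r / 2) (half_pos hr)
    rw [← mem_ball] at hyk
    refine Set.mem_biUnion (by_contra fun hk ↦ ?_) hyk
    obtain ⟨i, hi⟩ := hx k hk
    refine Set.mem_iInter.1 hy i (mem_closedBall.2 ?_)
    calc dist y (x i) ≤ dist y (u k) + dist (x i) (u k) := dist_triangle_right _ _ _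
      _ ≤ r := by rw [mem_ball] at hi hyk; linarith
  exact measure_mono_null hcover
    ((measure_biUnion_null_iff (Set.to_countable _)).2 fun _ hk ↦ hk)

theorem stmt18_general {S : Type*} [MetricSpace S] [TopologicalSpace.SeparableSpace S]
    [MeasurableSpace S] [BorelSpace S]
    (μ : Measure S) [IsProbabilityMeasure μ] (r : ℝ) (hr : 0 < r)
    {Ω : Type*} [MeasurableSpace Ω] (P : Measure Ω)
    (X : ℕ → Ω → S) (hmeas : ∀ i, Measurable (X i))
    (hindep : ProbabilityTheory.iIndepFun X P)
    (hident : ∀ i, Measure.map (X i) P = μ) :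
    ∀ᵐ ω ∂P, Tendsto
      (fun n => (μ (⋂ i ∈ Finset.range n, (closedBall (X i ω) r)ᶜ)).toReal)
      atTop (nhds 0) := by
  have := nonempty_of_isProbabilityMeasure μ
  set u := TopologicalSpace.denseSeq S
  have hhit : ∀ᵐ ω ∂P, ∀ k, μ (ball (u k) (r / 2)) ≠ 0 → ∃ i, X i ω ∈ ball (u k) (r / 2) :=
    ae_all_iff.2 fun k ↦ eventually_imp_distrib_left.2
      (ae_exists_mem_of_iIndepFun hmeas hindep hident measurableSet_ball)
  filter_upwards [hhit] with ω hω
  rw [ENNReal.tendsto_toReal_zero_iff, ← measure_iInter_compl_closedBall_eq_zero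
    (TopologicalSpace.denseRange_denseSeq S) hr hω]
  exact tendsto_measure_biInter_range
    (fun _ ↦ measurableSet_closedBall.compl.nullMeasurableSet) ⟨0, measure_ne_top _ _⟩

/-- In a separable metric space the conditional missing mass of an iid sample
converges to zero almost surely. -/
theorem stmt18 {S : Type*} [MetricSpace S] [TopologicalSpace.SeparableSpace S]
    [MeasurableSpace S] [BorelSpace S]
    (μ : Measure S) [IsProbabilityMeasure μ] (r : ℝ) (hr : 0 < r)
    {Ω : Type*} [MeasurableSpace Ω] (P : Measure Ω) [IsProbabilityMeasure P]
    (X : ℕ → Ω → S) (hmeas : ∀ i, Measurable (X i))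
    (hindep : ProbabilityTheory.iIndepFun X P)
    (hident : ∀ i, Measure.map (X i) P = μ) :
    ∀ᵐ ω ∂P, Tendsto
      (fun n => (μ (⋂ i ∈ Finset.range n, (closedBall (X i ω) r)ᶜ)).toReal)
      atTop (nhds 0) :=
  stmt18_general μ r hr P X hmeas hindep hident
end

section
/- For p ∈ (1,∞), consider the random element 1_{[0,X]} of L_p[0,∞), where X is a nonnegative real random variable. Then for any r > 0, the local separation statistic of any finite sample is at most 2^p + 1: if points z_1 = 1_{[0,x_1]}, ..., z_k = 1_{[0,x_k]} with x_1 < ... < x_k satisfy ‖z_i − z_j‖_p > r for all i ≠ j and there exists f ∈ L_p with ‖z_i − f‖_p ≤ r for all i, then k ≤ 2^p + 1. -/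
/-!
Since `‖1_[0,a] - 1_[0,b]‖_p = |a - b|^(1/p)`, separation by more than `r` means consecutive
points satisfy `x_(i+1) - x_i > r^p`, so `x_k - x_1 ≥ (k - 1) r^p`. On the other hand both
`1_[0,x_1]` and `1_[0,x_k]` lie within `r` of `f`, so by the triangle inequality
`(x_k - x_1)^(1/p) ≤ 2r`, i.e. `x_k - x_1 ≤ 2^p r^p`. Hence `k - 1 ≤ 2^p`.
-/

open MeasureTheory

lemma Set.Icc_sdiff_Icc_of_le {α : Type*} [LinearOrder α] {a b c : α} (hca : c ≤ a) :
    Set.Icc c b \ Set.Icc c a = Set.Ioc a b := by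
  ext t
  simp only [Set.mem_sdiff, Set.mem_Icc, Set.mem_Ioc, not_and, not_le]
  constructor
  · rintro ⟨⟨hct, htb⟩, hta⟩
    exact ⟨hta hct, htb⟩
  · rintro ⟨hat, htb⟩
    exact ⟨⟨hca.trans hat.le, htb⟩, fun _ => hat⟩

lemma eLpNorm_indicator_Icc_sub_indicator_Icc {q : ENNReal} (hq0 : q ≠ 0) (hq : q ≠ ⊤)
    {a b : ℝ} (ha : 0 ≤ a) (hab : a ≤ b) :
    eLpNorm ((Set.Icc (0 : ℝ) a).indicator (fun _ => (1 : ℝ)) -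
        (Set.Icc (0 : ℝ) b).indicator (fun _ => (1 : ℝ))) q (volume.restrict (Set.Ici 0))
      = ENNReal.ofReal (b - a) ^ (1 / q.toReal) := by
  rw [← eLpNorm_neg, neg_sub, ← Set.indicator_sdiff (Set.Icc_subset_Icc_right hab),
    Set.Icc_sdiff_Icc_of_le ha, eLpNorm_indicator_const measurableSet_Ioc hq0 hq,
    Measure.restrict_apply measurableSet_Ioc,
    Set.inter_eq_left.2 fun t ht => Set.mem_Ici.2 (ha.trans ht.1.le), Real.volume_Ioc]
  simp

lemma ENNReal.ofReal_lt_ofReal_rpow_one_div_iff {a b p : ℝ} (ha : 0 ≤ a) (hb : 0 ≤ b)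
    (hp : 0 < p) : ENNReal.ofReal a < ENNReal.ofReal b ^ (1 / p) ↔ a ^ p < b := by
  rw [ENNReal.ofReal_rpow_of_nonneg hb (by positivity), ENNReal.ofReal_lt_ofReal_iff_of_nonneg ha,
    one_div, Real.lt_rpow_inv_iff_of_pos ha hb hp]

lemma Fin.natCast_mul_le_sub_zero {n : ℕ} {x : Fin (n + 1) → ℝ} {d : ℝ}
    (hstep : ∀ i : Fin n, d ≤ x i.succ - x i.castSucc) (i : Fin (n + 1)) :
    (i : ℝ) * d ≤ x i - x 0 := by
  induction i using Fin.induction with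
  | zero => simp
  | succ i ih =>
    have := hstep i
    rw [Fin.val_castSucc] at ih
    rw [Fin.val_succ, Nat.cast_succ, add_one_mul]
    linarith

lemma eLpNorm_sub_le_two_mul {α E : Type*} [MeasurableSpace α] [NormedAddCommGroup E]
    {μ : Measure α} {q : ENNReal} (hq : 1 ≤ q) {g h f : α → E} {ε : ENNReal}
    (hg : AEStronglyMeasurable g μ) (hh : AEStronglyMeasurable h μ) (hf : AEStronglyMeasurable f μ)
    (hgf : eLpNorm (g - f) q μ ≤ ε) (hhf : eLpNorm (h - f) q μ ≤ ε) :
    eLpNorm (g - h) q μ ≤ 2 * ε := by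
  rw [← sub_sub_sub_cancel_right g h f, two_mul]
  exact (eLpNorm_sub_le (hg.sub hf) (hh.sub hf) hq).trans (add_le_add hgf hhf)

/-- In `L_p[0,∞)`, `1 < p < ∞`, any family of indicator functions `1_[0,x_i]`
which is pairwise more than `r` apart in `L_p` norm and contained in a common
closed `L_p` ball of radius `r` has at most `2^p + 1` elements. -/
theorem stmt19 (p : ℝ) (hp1 : 1 < p) (r : ℝ) (hr : 0 < r) (k : ℕ)
    (x : Fin k → ℝ) (hx0 : ∀ i, 0 ≤ x i) (hmono : StrictMono x)
    (hsep : ∀ i j : Fin k, i ≠ j →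
      ENNReal.ofReal r < eLpNorm
        ((Set.Icc (0 : ℝ) (x i)).indicator (fun _ => (1 : ℝ)) -
          (Set.Icc (0 : ℝ) (x j)).indicator (fun _ => (1 : ℝ)))
        (ENNReal.ofReal p) (volume.restrict (Set.Ici (0 : ℝ))))
    (f : ℝ → ℝ)
    (hfmem : MemLp f (ENNReal.ofReal p) (volume.restrict (Set.Ici (0 : ℝ))))
    (hf : ∀ i, eLpNorm
        ((Set.Icc (0 : ℝ) (x i)).indicator (fun _ => (1 : ℝ)) - f)
        (ENNReal.ofReal p) (volume.restrict (Set.Ici (0 : ℝ)))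
      ≤ ENNReal.ofReal r) :
    (k : ℝ) ≤ 2 ^ p + 1 := by
  have hp0 : 0 < p := zero_lt_one.trans hp1
  have hnorm {a b : ℝ} (ha : 0 ≤ a) (hab : a ≤ b) :
      eLpNorm ((Set.Icc (0 : ℝ) a).indicator (fun _ => (1 : ℝ)) -
          (Set.Icc (0 : ℝ) b).indicator (fun _ => (1 : ℝ))) (ENNReal.ofReal p)
          (volume.restrict (Set.Ici 0)) = ENNReal.ofReal (b - a) ^ (1 / p) := by
    simpa only [ENNReal.toReal_ofReal hp0.le] using eLpNorm_indicator_Icc_sub_indicator_Icc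
      (ENNReal.ofReal_pos.2 hp0).ne' ENNReal.ofReal_ne_top ha hab
  obtain _ | n := k
  · simp only [CharP.cast_eq_zero]
    positivity
  have hstep (i : Fin n) : r ^ p ≤ x i.succ - x i.castSucc := by
    have hlt := hmono (Fin.castSucc_lt_succ (i := i))
    have h := hsep _ _ (Fin.castSucc_lt_succ (i := i)).ne
    rw [hnorm (hx0 _) hlt.le,
      ENNReal.ofReal_lt_ofReal_rpow_one_div_iff hr.le (sub_nonneg.2 hlt.le) hp0] at h
    exact h.le
  have hspread : x (Fin.last n) - x 0 ≤ 2 ^ p * r ^ p := by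
    have hle := hmono.monotone (Fin.zero_le (Fin.last n))
    have h := eLpNorm_sub_le_two_mul (ENNReal.one_le_ofReal.2 hp1.le)
      (measurable_const.indicator measurableSet_Icc).aestronglyMeasurable
      (measurable_const.indicator measurableSet_Icc).aestronglyMeasurable
      hfmem.aestronglyMeasurable (hf 0) (hf (Fin.last n))
    rw [hnorm (hx0 0) hle, ← ENNReal.ofReal_ofNat 2, ← ENNReal.ofReal_mul zero_le_two, ← not_lt,
      ENNReal.ofReal_lt_ofReal_rpow_one_div_iff (by positivity) (sub_nonneg.2 hle) hp0,
      not_lt, Real.mul_rpow zero_le_two hr.le] at h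
    exact h
  have hn : (n : ℝ) * r ^ p ≤ 2 ^ p * r ^ p := by
    simpa using (Fin.natCast_mul_le_sub_zero hstep (Fin.last n)).trans hspread
  push_cast
  linarith [le_of_mul_le_mul_right hn (Real.rpow_pos_of_pos hr p)]
end
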